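/- arXiv:1904.00718 — 2 statements merged into one kernel-verified Lean document; each statement's English description precedes it below -/
import Mathlib

section
/- For p ∈ (0,1), δ ≥ 0, and integers k ≥ 3, the exponents β_k = min(1 + δ − 2p, 1 + δk − pk − p^k) satisfy β_k ≤ β_{k−1}. -/
lemma aux_pow_bound (p : ℝ) (hp0 : 0 ≤ p) (hp1 : p ≤ 1) (n : ℕ) :
    p ^ n * ((n : ℝ) + 1 - n * p) ≤ 1 := by
  induction n with
  | zero => simp
  | succ n ih =>
    have hpn : (0:ℝ) ≤ p ^ n := pow_nonneg hp0 n
    have h1 : p * ((n : ℝ) + 2 - ((n : ℝ) + 1) * p) ≤ (n : ℝ) + 1 - n * p := by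
      nlinarith [sq_nonneg (1 - p)]
    have h2 : p ^ (n + 1) * ((↑(n + 1) : ℝ) + 1 - (↑(n + 1)) * p)
        = p ^ n * (p * ((n : ℝ) + 2 - ((n : ℝ) + 1) * p)) := by
      push_cast; ring
    rw [h2]
    calc p ^ n * (p * ((n : ℝ) + 2 - ((n : ℝ) + 1) * p))
        ≤ p ^ n * ((n : ℝ) + 1 - n * p) := by
          apply mul_le_mul_of_nonneg_left h1 hpn
      _ ≤ 1 := ih

theorem stmt_11 (p δ : ℝ) (hp : p ∈ Set.Ioo (0:ℝ) 1) (hδ : 0 ≤ δ)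
    (k : ℕ) (hk : 3 ≤ k) :
    min (1 + δ - 2 * p) (1 + δ * k - p * k - p ^ k)
      ≤ min (1 + δ - 2 * p)
          (1 + δ * ((k : ℝ) - 1) - p * ((k : ℝ) - 1) - p ^ (k - 1)) := by
  obtain ⟨hp0, hp1⟩ := hp
  obtain ⟨m, rfl⟩ : ∃ m, k = m + 3 := ⟨k - 3, by omega⟩
  have hk1 : m + 3 - 1 = m + 2 := by omega
  rw [hk1]
  push_cast
  by_cases h : δ ≤ p - p ^ (m + 2) + p ^ (m + 3)
  · refine min_le_min le_rfl ?_
    nlinarith []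
  · push_neg at h
    refine le_min (min_le_left _ _) ((min_le_left _ _).trans ?_)
    have haux := aux_pow_bound p hp0.le hp1.le (m + 1)
    push_cast at haux
    have hpm : (0:ℝ) < p ^ (m + 1) := pow_pos hp0 _
    -- p^{m+2}(m+2-(m+1)p) ≤ p
    have h2 : p ^ (m + 2) * ((m : ℝ) + 2 - ((m : ℝ) + 1) * p) ≤ p := by
      have := mul_le_mul_of_nonneg_left haux hp0.le
      calc p ^ (m + 2) * ((m : ℝ) + 2 - ((m : ℝ) + 1) * p)
          = p * (p ^ (m + 1) * ((m : ℝ) + 1 + 1 - ((m : ℝ) + 1) * p)) := by ring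
        _ ≤ p * 1 := this
        _ = p := mul_one p
    have h3 : p ^ (m + 3) = p ^ (m + 2) * p := by ring
    have hm : (0:ℝ) ≤ (m : ℝ) + 1 := by positivity
    nlinarith [mul_le_mul_of_nonneg_left h.le hm]
end

section
/- For p ∈ (0,1), δ ≥ 0 with p − log(1/p) < δ < p − p·log(1/p), and γ = log(1/p)/(p−δ), the constants c_k(p,δ) = (log(1/(γp^k)) + γp^k − 1)/(kγp) satisfy c_k(p,δ) ∈ (0,1] for every integer k ≥ 1. -/
theorem stmt_16 (p δ : ℝ) (hp : p ∈ Set.Ioo (0:ℝ) 1) (hδ0 : 0 ≤ δ)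
    (hδ1 : p - Real.log (1 / p) < δ)
    (hδ2 : δ < p - p * Real.log (1 / p))
    (γ : ℝ) (hγ : γ = Real.log (1 / p) / (p - δ)) :
    ∀ k : ℕ, 1 ≤ k →
      (Real.log (1 / (γ * p ^ k)) + γ * p ^ k - 1) / ((k : ℝ) * γ * p)
        ∈ Set.Ioc (0:ℝ) 1 := by
  obtain ⟨hp0, hp1⟩ := hp
  intro k hk
  have hk' : (0:ℝ) < k := by exact_mod_cast hk
  have hL : 0 < Real.log (1 / p) := Real.log_pos (by rw [lt_div_iff₀ hp0]; linarith)
  have hpδ : p * Real.log (1/p) < p - δ := by linarith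
  have hpδ0 : 0 < p - δ := lt_trans (by positivity) hpδ
  have hγ1 : 1 < γ := by rw [hγ, lt_div_iff₀ hpδ0]; linarith
  have hγp : γ * p < 1 := by
    rw [hγ, div_mul_eq_mul_div, div_lt_one hpδ0]; nlinarith
  have hγ0 : 0 < γ := by linarith
  have hpk : (0:ℝ) < p ^ k := pow_pos hp0 k
  have hx0 : 0 < γ * p ^ k := mul_pos hγ0 hpk
  have hx1 : γ * p ^ k < 1 := by
    calc γ * p ^ k ≤ γ * p ^ 1 := by
          apply mul_le_mul_of_nonneg_left _ hγ0.le
          exact pow_le_pow_of_le_one hp0.le hp1.le hk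
      _ = γ * p := by ring
      _ < 1 := hγp
  have hden : 0 < (k:ℝ) * γ * p := mul_pos (mul_pos hk' hγ0) hp0
  have hnum : 0 < Real.log (1/(γ*p^k)) + γ*p^k - 1 := by
    have h := Real.log_lt_sub_one_of_pos hx0 (ne_of_lt hx1)
    rw [Real.log_div one_ne_zero (ne_of_gt hx0), Real.log_one]
    linarith
  have hupper : Real.log (1/(γ*p^k)) + γ*p^k - 1 ≤ (k:ℝ)*γ*p := by
    have hlogx : Real.log (γ * p ^ k) = Real.log γ + k * Real.log p := by
      rw [Real.log_mul (ne_of_gt hγ0) (ne_of_gt hpk), Real.log_pow]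
    have hL' : Real.log (1/p) = γ * (p - δ) := by
      rw [hγ]; field_simp
    have hlogp : Real.log p = -(γ * (p - δ)) := by
      have : Real.log (1/p) = -Real.log p := by
        rw [Real.log_div one_ne_zero (ne_of_gt hp0), Real.log_one]; ring
      linarith [hL' ▸ this]
    have hlogγ : 0 ≤ Real.log γ := Real.log_nonneg hγ1.le
    have hkγδ : 0 ≤ (k:ℝ) * γ * δ := by positivity
    rw [Real.log_div one_ne_zero (ne_of_gt hx0), Real.log_one, hlogx, hlogp]
    nlinarith [hx1, hlogγ, hkγδ]
  exact ⟨div_pos hnum hden, (div_le_one hden).mpr hupper⟩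
end
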